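/- Let G⁽⁴⁾₁, …, G⁽⁴⁾₁₆ be the sixteen four-qubit states of the paper's Theorem 7, viewed in (ℂ² ⊗ ℂ²) ⊗ (ℂ² ⊗ ℂ²). For every pair α, β ∈ {1, …, 16}, there exists a unitary operator U' on the two-qubit space ℂ² ⊗ ℂ² such that G⁽⁴⁾_α = (I' ⊗ U') G⁽⁴⁾_β, where I' is the identity on the first two qubits. In particular, every state of the set is obtained from any other by a unitary acting on the last two qubits alone (the 2 : 2 bipartition property). -/

import Mathlib

/-! Each `G⁽⁴⁾ᵢ` has the form `½ ∑ₚ εᵢ(p) |p⟩|σᵢ p⟩` with `σᵢ` a permutation of the two-qubit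
basis and `εᵢ(p) = ±1`; that is, `G⁽⁴⁾ᵢ = (I' ⊗ Nᵢ) Φ` for the maximally entangled state
`Φ = ½ ∑ₚ |p⟩|p⟩` and the signed permutation matrix `Nᵢ`. Signed permutation matrices are
unitary, so `G⁽⁴⁾_α = (I' ⊗ N_α N_β⋆) G⁽⁴⁾_β`. -/

open scoped InnerProductSpace

noncomputable section

/-- The standard basis kets `|0⟩, |1⟩` of a qubit `ℂ² = EuclideanSpace ℂ (Fin 2)`. -/
def ket2 (i : Fin 2) : EuclideanSpace ℂ (Fin 2) := EuclideanSpace.single i 1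

/-- Tensor product of vectors of Euclidean spaces, realized concretely:
`(x ⊗ y) (i, j) = x i * y j`.  The induced inner product on
`EuclideanSpace ℂ (ι × κ)` is exactly the tensor-product inner product. -/
def tp {ι κ : Type*} [Fintype ι] [Fintype κ]
    (x : EuclideanSpace ℂ ι) (y : EuclideanSpace ℂ κ) : EuclideanSpace ℂ (ι × κ) :=
  (WithLp.equiv 2 _).symm fun p => x p.1 * y p.2

/-- The four-qubit basis state `|abcd⟩ = |a⟩ ⊗ |b⟩ ⊗ |c⟩ ⊗ |d⟩`. -/
def ket4 (a b c d : Fin 2) : EuclideanSpace ℂ (Fin 2 × Fin 2 × Fin 2 × Fin 2) :=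
  tp (ket2 a) (tp (ket2 b) (tp (ket2 c) (ket2 d)))

/-- The sixteen four-qubit states `G⁽⁴⁾₁, …, G⁽⁴⁾₁₆` of the paper's Theorem 7
(indexed here by `0, …, 15`; odd paper-indices take the upper signs, even
paper-indices the lower signs). -/
def G4 : Fin 16 → EuclideanSpace ℂ (Fin 2 × Fin 2 × Fin 2 × Fin 2) :=
  ![(2 : ℂ)⁻¹ • (ket4 0 0 0 0 + ket4 0 1 1 1 + ket4 1 0 1 0 + ket4 1 1 0 1),
    (2 : ℂ)⁻¹ • (ket4 0 0 0 0 - ket4 0 1 1 1 + ket4 1 0 1 0 - ket4 1 1 0 1),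
    (2 : ℂ)⁻¹ • (ket4 0 0 0 0 + ket4 0 1 1 1 - ket4 1 0 1 0 - ket4 1 1 0 1),
    (2 : ℂ)⁻¹ • (ket4 0 0 0 0 - ket4 0 1 1 1 - ket4 1 0 1 0 + ket4 1 1 0 1),
    (2 : ℂ)⁻¹ • (ket4 0 0 0 1 + ket4 0 1 1 0 + ket4 1 0 1 1 + ket4 1 1 0 0),
    (2 : ℂ)⁻¹ • (ket4 0 0 0 1 - ket4 0 1 1 0 + ket4 1 0 1 1 - ket4 1 1 0 0),
    (2 : ℂ)⁻¹ • (ket4 0 0 0 1 + ket4 0 1 1 0 - ket4 1 0 1 1 - ket4 1 1 0 0),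
    (2 : ℂ)⁻¹ • (ket4 0 0 0 1 - ket4 0 1 1 0 - ket4 1 0 1 1 + ket4 1 1 0 0),
    (2 : ℂ)⁻¹ • (ket4 0 0 1 0 + ket4 0 1 0 1 + ket4 1 0 0 0 + ket4 1 1 1 1),
    (2 : ℂ)⁻¹ • (ket4 0 0 1 0 - ket4 0 1 0 1 + ket4 1 0 0 0 - ket4 1 1 1 1),
    (2 : ℂ)⁻¹ • (ket4 0 0 1 0 + ket4 0 1 0 1 - ket4 1 0 0 0 - ket4 1 1 1 1),
    (2 : ℂ)⁻¹ • (ket4 0 0 1 0 - ket4 0 1 0 1 - ket4 1 0 0 0 + ket4 1 1 1 1),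
    (2 : ℂ)⁻¹ • (ket4 0 0 1 1 + ket4 0 1 0 0 + ket4 1 0 0 1 + ket4 1 1 1 0),
    (2 : ℂ)⁻¹ • (ket4 0 0 1 1 - ket4 0 1 0 0 + ket4 1 0 0 1 - ket4 1 1 1 0),
    (2 : ℂ)⁻¹ • (ket4 0 0 1 1 + ket4 0 1 0 0 - ket4 1 0 0 1 - ket4 1 1 1 0),
    (2 : ℂ)⁻¹ • (ket4 0 0 1 1 - ket4 0 1 0 0 - ket4 1 0 0 1 + ket4 1 1 1 0)]

/-- The operator `I' ⊗ U'` on the four-qubit space, acting as the identity on the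
first two qubits and as the matrix `U'` on the last two qubits. -/
def idTwoTensorMat (U : Matrix (Fin 2 × Fin 2) (Fin 2 × Fin 2) ℂ)
    (v : EuclideanSpace ℂ (Fin 2 × Fin 2 × Fin 2 × Fin 2)) :
    EuclideanSpace ℂ (Fin 2 × Fin 2 × Fin 2 × Fin 2) :=
  (WithLp.equiv 2 _).symm fun p => ∑ q : Fin 2 × Fin 2, U p.2.2 q * v (p.1, p.2.1, q)

open Matrix

section SignedPermutation

variable {n R : Type*} [DecidableEq n]

def signedPermMatrix [Zero R] (σ : Equiv.Perm n) (ε : n → R) : Matrix n n R :=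
  of fun q p => if q = σ p then ε p else 0

lemma signedPermMatrix_mem_unitaryGroup [Fintype n] [CommRing R] [StarRing R]
    (σ : Equiv.Perm n) {ε : n → R} (hε : ∀ p, star (ε p) * ε p = 1) :
    signedPermMatrix σ ε ∈ unitaryGroup n R := by
  rw [mem_unitaryGroup_iff']
  ext p p'
  rw [mul_apply, Finset.sum_eq_single (σ p) (fun q _ hq => by simp [signedPermMatrix, hq])
    (by simp)]
  by_cases h : p = p'
  · subst h
    simp [signedPermMatrix, hε]
  · simp [signedPermMatrix, one_apply, h, σ.injective.eq_iff]

end SignedPermutation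

lemma idTwoTensorMat_idTwoTensorMat (A B : Matrix (Fin 2 × Fin 2) (Fin 2 × Fin 2) ℂ)
    (v : EuclideanSpace ℂ (Fin 2 × Fin 2 × Fin 2 × Fin 2)) :
    idTwoTensorMat A (idTwoTensorMat B v) = idTwoTensorMat (A * B) v := by
  ext ⟨a, b, q⟩
  change (A *ᵥ B *ᵥ fun r => v (a, b, r)) q = ((A * B) *ᵥ fun r => v (a, b, r)) q
  rw [mulVec_mulVec]

lemma exists_unitary_idTwoTensorMat_eq {u v w : EuclideanSpace ℂ (Fin 2 × Fin 2 × Fin 2 × Fin 2)}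
    {A B : Matrix (Fin 2 × Fin 2) (Fin 2 × Fin 2) ℂ} (hA : A ∈ unitaryGroup (Fin 2 × Fin 2) ℂ)
    (hB : B ∈ unitaryGroup (Fin 2 × Fin 2) ℂ) (hv : v = idTwoTensorMat A u)
    (hw : w = idTwoTensorMat B u) :
    ∃ U ∈ unitaryGroup (Fin 2 × Fin 2) ℂ, v = idTwoTensorMat U w := by
  refine ⟨A * star B, mul_mem hA (Unitary.star_mem hB), ?_⟩
  rw [hv, hw, idTwoTensorMat_idTwoTensorMat, mul_assoc, (mem_unitaryGroup_iff').mp hB, mul_one]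

lemma ket4_apply (a b c d : Fin 2) (x : Fin 2 × Fin 2 × Fin 2 × Fin 2) :
    ket4 a b c d x = if x = (a, b, c, d) then 1 else 0 := by
  obtain ⟨a', b', c', d'⟩ := x
  simp only [ket4, tp, ket2, WithLp.equiv_symm_apply, PiLp.single_apply, Prod.mk.injEq, mul_ite,
    mul_one, mul_zero]
  split_ifs <;> simp_all

def maxEntangled : EuclideanSpace ℂ (Fin 2 × Fin 2 × Fin 2 × Fin 2) :=
  WithLp.toLp 2 fun p => if p.2.2 = (p.1, p.2.1) then 2⁻¹ else 0

lemma idTwoTensorMat_signedPermMatrix_maxEntangled (σ : Equiv.Perm (Fin 2 × Fin 2))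
    (ε : Fin 2 × Fin 2 → ℂ) :
    idTwoTensorMat (signedPermMatrix σ ε) maxEntangled =
      (2 : ℂ)⁻¹ • ∑ p, ε p • ket4 p.1 p.2 (σ p).1 (σ p).2 := by
  ext ⟨a, b, q⟩
  simp only [idTwoTensorMat, signedPermMatrix, of_apply, maxEntangled, mul_ite, ite_mul, zero_mul,
    mul_zero, Finset.sum_ite_eq', Finset.mem_univ, ↓reduceIte, WithLp.equiv_symm_apply,
    PiLp.smul_apply, WithLp.ofLp_sum, Finset.sum_apply, ket4_apply, Prod.mk.injEq, smul_eq_mul,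
    mul_one]
  rw [Finset.sum_eq_single (a, b) (fun x _ hx => if_neg fun h => hx (Prod.ext h.1.symm h.2.1.symm))
    (by simp)]
  simp [mul_comm]

namespace G4

-- Writing `i = 8 i₃ + 4 i₂ + 2 i₁ + i₀`, the state `G4 i` pairs `|ab⟩` with `|a + b + i₃, b + i₂⟩`
-- and gives that term the sign `(-1) ^ (i₁ a + i₀ b)`.
def bit (i : Fin 16) (k : ℕ) : Fin 2 := if (i : ℕ).testBit k then 1 else 0

def cnot : Equiv.Perm (Fin 2 × Fin 2) :=
  Function.Involutive.toPerm (fun p => (p.1 + p.2, p.2)) (by unfold Function.Involutive; decide)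

def perm (i : Fin 16) : Equiv.Perm (Fin 2 × Fin 2) :=
  cnot.trans (Equiv.addRight (bit i 3, bit i 2))

def sign (i : Fin 16) (p : Fin 2 × Fin 2) : ℂ :=
  (-1) ^ ((bit i 1 * p.1 + bit i 0 * p.2 : Fin 2) : ℕ)

lemma star_sign_mul_sign (i : Fin 16) (p : Fin 2 × Fin 2) : star (sign i p) * sign i p = 1 := by
  simp [sign, ← pow_add, ← two_mul, pow_mul]

lemma G4_eq_sum_smul_ket4 (i : Fin 16) :
    G4 i = (2 : ℂ)⁻¹ • ∑ p, sign i p • ket4 p.1 p.2 (perm i p).1 (perm i p).2 := by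
  fin_cases i <;> simp +decide [G4, Fintype.sum_prod_type, perm, cnot, sign, bit] <;> module

end G4

/-- Viewing the sixteen states in `(ℂ² ⊗ ℂ²) ⊗ (ℂ² ⊗ ℂ²)`, for
every pair `α, β` there is a unitary `U'` on the two-qubit space `ℂ² ⊗ ℂ²` with
`G⁽⁴⁾_α = (I' ⊗ U') G⁽⁴⁾_β`, where `I'` is the identity on the first two qubits:
every state of the set is obtained from any other by a unitary acting on the last
two qubits alone (the 2 : 2 bipartition property). -/
theorem G4_related_by_unitary_on_last_two_qubits (α β : Fin 16) :
    ∃ U' : Matrix (Fin 2 × Fin 2) (Fin 2 × Fin 2) ℂ,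
      U' ∈ Matrix.unitaryGroup (Fin 2 × Fin 2) ℂ ∧
      G4 α = idTwoTensorMat U' (G4 β) := by
  have hU (i : Fin 16) : signedPermMatrix (G4.perm i) (G4.sign i) ∈ unitaryGroup _ ℂ :=
    signedPermMatrix_mem_unitaryGroup _ (G4.star_sign_mul_sign i)
  have hG4 (i : Fin 16) :
      G4 i = idTwoTensorMat (signedPermMatrix (G4.perm i) (G4.sign i)) maxEntangled := by
    rw [idTwoTensorMat_signedPermMatrix_maxEntangled, G4.G4_eq_sum_smul_ket4]
  exact exists_unitary_idTwoTensorMat_eq (hU α) (hU β) (hG4 α) (hG4 β)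

end
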